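/- arXiv:1604.03230 — 4 statements merged into one kernel-verified Lean document; each statement's English description precedes it below -/
import Mathlib

section
/- Let A be a unital C*-algebra and x ∈ A with ‖1 - x‖ < 1. Let x = u|x| be the polar decomposition (u exists in A since x is invertible). Then ‖1 - u‖ ≤ √2 · ‖1 - x‖. -/
/-!
Put `y = 1 - x` and `a = (1 - u)⋆(1 - u) = 2 - u - u⋆`. Since `u` is unitary,
`y⋆y + u⋆(y y⋆)u = 2(1 - m)² + (a m + m a)`, and the left side is at most `2‖y‖²`.
Evaluate this at a state `ψ` with `ψ a = ‖a‖`: on symmetrised products `a` then acts as the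
scalar `‖a‖`, so with `t = ψ m ≥ 0` and `(1 - t)² ≤ ψ((1 - m)²)` one gets
`(1 - t)² + ‖a‖ t ≤ ‖y‖²`. For `‖y‖ < 1` this forces `‖1 - u‖² = ‖a‖ ≤ 2‖y‖²`.
-/

/-- A state, taken real-linear so that the real Hahn–Banach theorem produces it; positivity is a
consequence of `‖ψ‖ ≤ 1` and `ψ 1 = 1`. -/
structure IsRealState {A : Type*} [CStarAlgebra A] (ψ : StrongDual ℝ A) : Prop where
  norm_le_one : ‖ψ‖ ≤ 1
  map_one : ψ 1 = 1

namespace IsRealState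

variable {A : Type*} [CStarAlgebra A] {ψ : StrongDual ℝ A}

lemma apply_le_norm (hψ : IsRealState ψ) (b : A) : ψ b ≤ ‖b‖ := by
  simpa using (Real.le_norm_self _).trans (ψ.le_of_opNorm_le hψ.norm_le_one b)

lemma apply_algebraMap (hψ : IsRealState ψ) (r : ℝ) : ψ (algebraMap ℝ A r) = r := by
  rw [Algebra.algebraMap_eq_smul_one, map_smul, hψ.map_one, smul_eq_mul, mul_one]

variable [PartialOrder A] [StarOrderedRing A]

lemma apply_nonneg (hψ : IsRealState ψ) {b : A} (hb : 0 ≤ b) : 0 ≤ ψ b := by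
  have hle : 0 ≤ algebraMap ℝ A ‖b‖ - b :=
    sub_nonneg.mpr (IsSelfAdjoint.of_nonneg hb).le_algebraMap_norm_self
  have hnorm : ‖algebraMap ℝ A ‖b‖ - b‖ ≤ ‖b‖ :=
    (CStarAlgebra.norm_le_iff_le_algebraMap _ (norm_nonneg b) hle).mpr (sub_le_self _ hb)
  have := (hψ.apply_le_norm _).trans hnorm
  rw [map_sub, hψ.apply_algebraMap] at this
  linarith

lemma apply_mul_self_nonneg (hψ : IsRealState ψ) {b : A} (hb : IsSelfAdjoint b) :
    0 ≤ ψ (b * b) :=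
  hψ.apply_nonneg (by simpa only [hb.star_eq] using star_mul_self_nonneg b)

lemma sq_apply_le_apply_mul_self (hψ : IsRealState ψ) {b : A} (hb : IsSelfAdjoint b) :
    ψ b ^ 2 ≤ ψ (b * b) := by
  have hsa : IsSelfAdjoint (b - ψ b • (1 : A)) := hb.sub (.smul (.all _) (.one A))
  have hexp : (b - ψ b • (1 : A)) * (b - ψ b • 1) = b * b - (2 * ψ b) • b + (ψ b ^ 2) • 1 := by
    simp only [sub_mul, mul_sub, smul_mul_assoc, mul_smul_comm, one_mul, mul_one]
    module
  have := hψ.apply_mul_self_nonneg hsa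
  rw [hexp, map_add, map_sub, map_smul, map_smul, hψ.map_one, smul_eq_mul, smul_eq_mul] at this
  nlinarith

lemma apply_mul_add_mul_eq_zero (hψ : IsRealState ψ) {c b : A} (hc : IsSelfAdjoint c)
    (hb : IsSelfAdjoint b) (hcc : ψ (c * c) = 0) : ψ (c * b + b * c) = 0 := by
  have hlin : ∀ t : ℝ, 0 ≤ t * ψ (c * b + b * c) + ψ (b * b) := by
    intro t
    have hexp : (t • c + b) * (t • c + b) = (t * t) • (c * c) + t • (c * b + b * c) + b * b := by
      simp only [add_mul, mul_add, smul_mul_assoc, mul_smul_comm]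
      module
    have := hψ.apply_mul_self_nonneg (((IsSelfAdjoint.all t).smul hc).add hb)
    rwa [hexp, map_add, map_add, map_smul, map_smul, hcc, smul_zero, zero_add,
      smul_eq_mul] at this
  by_contra hne
  have := hlin (-(ψ (b * b) + 1) / ψ (c * b + b * c))
  rw [div_mul_cancel₀ _ hne] at this
  linarith

lemma apply_mul_add_mul_of_apply_eq_norm (hψ : IsRealState ψ) {a b : A} (ha : IsSelfAdjoint a)
    (hb : IsSelfAdjoint b) (hψa : ψ a = ‖a‖) : ψ (a * b + b * a) = 2 * ‖a‖ * ψ b := by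
  set c := ‖a‖ • (1 : A) - a
  have hc : IsSelfAdjoint c := (IsSelfAdjoint.smul (.all _) (.one A)).sub ha
  have hcc : ψ (c * c) = ψ (a * a) - ‖a‖ ^ 2 := by
    have hexp : c * c = a * a - (2 * ‖a‖) • a + (‖a‖ ^ 2) • 1 := by
      simp only [c, sub_mul, mul_sub, smul_mul_assoc, mul_smul_comm, one_mul, mul_one]
      module
    rw [hexp, map_add, map_sub, map_smul, map_smul, hψ.map_one, hψa, smul_eq_mul, smul_eq_mul]
    ring
  have hup : ψ (a * a) ≤ ‖a‖ ^ 2 := ha.norm_mul_self ▸ hψ.apply_le_norm (a * a)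
  have hlow : ‖a‖ ^ 2 ≤ ψ (a * a) := hψa ▸ hψ.sq_apply_le_apply_mul_self ha
  have hcross := hψ.apply_mul_add_mul_eq_zero hc hb (by rw [hcc]; linarith)
  have hexp : c * b + b * c = (2 * ‖a‖) • b - (a * b + b * a) := by
    simp only [c, sub_mul, mul_sub, smul_mul_assoc, mul_smul_comm, one_mul, mul_one]
    module
  rw [hexp, map_sub, map_smul, smul_eq_mul] at hcross
  linarith

lemma exists_apply_eq_norm [Nontrivial A] {a : A} (ha : 0 ≤ a) :
    ∃ ψ : StrongDual ℝ A, IsRealState ψ ∧ ψ a = ‖a‖ := by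
  obtain ⟨ψ, hψn, hψ⟩ := exists_dual_vector'' ℝ (1 + a)
  have hle (b : A) : ψ b ≤ ‖b‖ := by
    simpa using (Real.le_norm_self _).trans (ψ.le_of_opNorm_le hψn b)
  have hspec : ‖a‖ + 1 ∈ spectrum ℝ (algebraMap ℝ A 1 + a) :=
    spectrum.add_mem_add_iff.mpr (CStarAlgebra.norm_mem_spectrum_of_nonneg ha)
  have hnorm : ‖a‖ + 1 ≤ ‖1 + a‖ := by
    simpa [abs_of_nonneg (by positivity : 0 ≤ ‖a‖ + 1)] using spectrum.norm_le_norm_of_mem hspec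
  have h1 := hle 1
  have ha' := hle a
  rw [map_add] at hψ
  simp only [RCLike.ofReal_real_eq_id, id, norm_one] at hψ h1
  exact ⟨ψ, ⟨hψn, by linarith⟩, by linarith⟩

end IsRealState

section Polar

variable {A : Type*} [CStarAlgebra A] {u m : A}

lemma star_one_sub_mul_mul_self_add_conj_eq (hu : star u * u = 1) (hm : IsSelfAdjoint m) :
    star (1 - u * m) * (1 - u * m) + star u * ((1 - u * m) * star (1 - u * m)) * u =
      2 • ((1 - m) * (1 - m)) + (star (1 - u) * (1 - u) * m + m * (star (1 - u) * (1 - u))) := by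
  have h₁ : star (1 - u * m) * (1 - u * m) = 1 - u * m - m * star u + m * m := by
    rw [star_sub, star_one, star_mul, hm.star_eq]
    calc (1 - m * star u) * (1 - u * m)
        = 1 - u * m - m * star u + m * (star u * u) * m := by noncomm_ring
      _ = 1 - u * m - m * star u + m * m := by rw [hu, mul_one]
  have h₂ : star u * ((1 - u * m) * star (1 - u * m)) * u = 1 - m * u - star u * m + m * m := by
    rw [star_sub, star_one, star_mul, hm.star_eq]
    calc star u * ((1 - u * m) * (1 - m * star u)) * u
        = star u * u - (star u * u) * m * u - star u * m * (star u * u)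
            + (star u * u) * m * m * (star u * u) := by noncomm_ring
      _ = 1 - m * u - star u * m + m * m := by rw [hu]; noncomm_ring
  have h₃ : star (1 - u) * (1 - u) = 1 + 1 - u - star u := by
    rw [star_sub, star_one]
    calc (1 - star u) * (1 - u) = 1 - u - star u + star u * u := by noncomm_ring
      _ = 1 + 1 - u - star u := by rw [hu]; noncomm_ring
  rw [h₁, h₂, h₃]
  noncomm_ring

variable [PartialOrder A] [StarOrderedRing A]

lemma star_mul_self_add_conj_mul_star_self_le (y : A) (hu : star u * u = 1) :
    star y * y + star u * (y * star y) * u ≤ algebraMap ℝ A (2 * ‖y‖ ^ 2) := by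
  have hconj : star u * (y * star y) * u ≤ algebraMap ℝ A (‖y‖ ^ 2) :=
    calc star u * (y * star y) * u ≤ star u * algebraMap ℝ A (‖y‖ ^ 2) * u :=
          star_left_conjugate_le_conjugate CStarAlgebra.mul_star_le_algebraMap_norm_sq u
      _ = algebraMap ℝ A (‖y‖ ^ 2) := by
          rw [← Algebra.commutes, mul_assoc, hu, mul_one]
  calc star y * y + star u * (y * star y) * u
      ≤ algebraMap ℝ A (‖y‖ ^ 2) + algebraMap ℝ A (‖y‖ ^ 2) :=
        add_le_add CStarAlgebra.star_mul_le_algebraMap_norm_sq hconj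
    _ = algebraMap ℝ A (2 * ‖y‖ ^ 2) := by rw [← map_add, two_mul]

end Polar

/-- The quadratic `(1 - t) ^ 2 + 2 e t - e` equals `(t - (1 - e)) ^ 2 + e (1 - e) ≥ 0`. -/
lemma le_two_mul_of_one_sub_sq_add_mul_le {t ν e : ℝ} (ht : 0 ≤ t) (he₀ : 0 ≤ e) (he₁ : e < 1)
    (h : (1 - t) ^ 2 + ν * t ≤ e) : ν ≤ 2 * e := by
  have htpos : 0 < t := lt_of_le_of_ne ht (by rintro rfl; nlinarith)
  have : ν * t ≤ 2 * e * t := by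
    nlinarith [sq_nonneg (t - (1 - e)), mul_nonneg he₀ (sub_nonneg.mpr he₁.le)]
  exact le_of_mul_le_mul_right this htpos

theorem stmt0_general {A : Type*} [CStarAlgebra A] [PartialOrder A] [StarOrderedRing A]
    (x m : A) (u : A) (hu : u ∈ unitary A)
    (hm_nonneg : (0 : A) ≤ m)
    (hpolar : x = u * m) (hx : ‖(1 : A) - x‖ < 1) :
    ‖(1 : A) - u‖ ≤ Real.sqrt 2 * ‖(1 : A) - x‖ := by
  rcases subsingleton_or_nontrivial A with hA | hA
  · simp [Subsingleton.elim (1 - u) 0]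
  set a := star (1 - u) * (1 - u)
  have ha : 0 ≤ a := star_mul_self_nonneg (1 - u)
  have hm : IsSelfAdjoint m := .of_nonneg hm_nonneg
  have hu' : star u * u = 1 := Unitary.star_mul_self_of_mem hu
  obtain ⟨ψ, hψ, hψa⟩ := IsRealState.exists_apply_eq_norm ha
  have hineq : 2 • ((1 - m) * (1 - m)) + (a * m + m * a) ≤ algebraMap ℝ A (2 * ‖1 - x‖ ^ 2) := by
    rw [← star_one_sub_mul_mul_self_add_conj_eq hu' hm, ← hpolar]
    exact star_mul_self_add_conj_mul_star_self_le _ hu'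
  have hψineq := hψ.apply_nonneg (sub_nonneg.mpr hineq)
  rw [map_sub, map_add, map_nsmul, hψ.apply_algebraMap,
    hψ.apply_mul_add_mul_of_apply_eq_norm (.star_mul_self _) hm hψa] at hψineq
  have hjensen := hψ.sq_apply_le_apply_mul_self ((IsSelfAdjoint.one A).sub hm)
  rw [map_sub, hψ.map_one] at hjensen
  have hν : ‖a‖ ≤ 2 * ‖1 - x‖ ^ 2 :=
    le_two_mul_of_one_sub_sq_add_mul_le (hψ.apply_nonneg hm_nonneg) (by positivity)
      (pow_lt_one₀ (norm_nonneg _) hx two_ne_zero)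
      (by rw [nsmul_eq_mul, Nat.cast_ofNat] at hψineq; linarith)
  rw [CStarRing.norm_star_mul_self] at hν
  rw [← Real.sqrt_sq (norm_nonneg (1 - x)), ← Real.sqrt_mul zero_le_two]
  exact Real.le_sqrt_of_sq_le (by nlinarith)

/-- In a unital C*-algebra, if `‖1 - x‖ < 1` and `x = u * m` is the polar
decomposition of `x` (so `u` is unitary and `m = |x| = (x* x)^{1/2}`, i.e. `m` is a nonnegative
self-adjoint element with `m * m = x* x`), then `‖1 - u‖ ≤ √2 * ‖1 - x‖`. -/
theorem stmt0 {A : Type*} [CStarAlgebra A] [PartialOrder A] [StarOrderedRing A]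
    (x m : A) (u : A) (hu : u ∈ unitary A)
    (hm_sa : IsSelfAdjoint m) (hm_nonneg : (0 : A) ≤ m) (hm_sq : m * m = star x * x)
    (hpolar : x = u * m) (hx : ‖(1 : A) - x‖ < 1) :
    ‖(1 : A) - u‖ ≤ Real.sqrt 2 * ‖(1 : A) - x‖ :=
  stmt0_general x m u hu hm_nonneg hpolar hx
end

section
/- Let A and B be C*-subalgebras of a C*-algebra C such that A ⊆ B, and suppose that for every b in the unit ball of B there exists a ∈ A in the unit ball with ‖b - a‖ < 1 (i.e., B ⊂_1 A). Then A = B. -/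
/-!
If `B ⊄ A`, Riesz's lemma applied to the closed proper subspace `A` of the normed space `B` gives
a unit vector of `B` at distance at least `r` from `A`, for any `r < 1`; taking `γ' < r` contradicts
the near-inclusion.
-/

theorem Submodule.eq_of_le_of_forall_norm_le_one_exists_norm_sub_le {𝕜 E : Type*} [RCLike 𝕜]
    [NormedAddCommGroup E] [NormedSpace 𝕜 E] {F G : Submodule 𝕜 E}
    (hF : IsClosed (F : Set E)) (hFG : F ≤ G) {γ : ℝ} (hγ : γ < 1)
    (hnear : ∀ b ∈ G, ‖b‖ ≤ 1 → ∃ a ∈ F, ‖b - a‖ ≤ γ) : F = G := by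
  refine le_antisymm hFG fun x hxG => by_contra fun hxF => ?_
  obtain ⟨r, hγr, hr1⟩ := exists_between hγ
  obtain ⟨x₀, -, hx₀_norm, hx₀⟩ := riesz_lemma_of_lt_one (F := F.comap G.subtype)
    (hF.preimage continuous_subtype_val) ⟨⟨x, hxG⟩, hxF⟩ hr1
  obtain ⟨a, haF, ha⟩ := hnear x₀ x₀.2 hx₀_norm.le
  have hfar := hx₀ ⟨a, hFG haF⟩ haF
  rw [← norm_coe, Submodule.coe_sub] at hfar
  linarith

theorem stmt4_general {C : Type*} [NonUnitalCStarAlgebra C]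
    (A B : NonUnitalStarSubalgebra ℂ C)
    (hA_closed : IsClosed (A : Set C))
    (hAB : A ≤ B)
    (hnear : ∃ γ' : ℝ, γ' < 1 ∧ ∀ b ∈ B, ‖b‖ ≤ 1 → ∃ a ∈ A, ‖b - a‖ ≤ γ') :
    A = B := by
  obtain ⟨γ', hγ', hnear⟩ := hnear
  have hsub := Submodule.eq_of_le_of_forall_norm_le_one_exists_norm_sub_le
    (F := A.toNonUnitalSubalgebra.toSubmodule) (G := B.toNonUnitalSubalgebra.toSubmodule)
    hA_closed hAB hγ' hnear
  exact NonUnitalStarSubalgebra.ext fun x => SetLike.ext_iff.mp hsub x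

/-- Let `A ⊆ B` be C*-subalgebras of a C*-algebra `C` (norm-closed star
subalgebras), and suppose `B ⊂₁ A`: there is `γ' < 1` such that every element of the unit
ball of `B` is within distance `γ'` of an element of `A`.  Then `A = B`. -/
theorem stmt4 {C : Type*} [NonUnitalCStarAlgebra C]
    (A B : NonUnitalStarSubalgebra ℂ C)
    (hA_closed : IsClosed (A : Set C)) (hB_closed : IsClosed (B : Set C))
    (hAB : A ≤ B)
    (hnear : ∃ γ' : ℝ, γ' < 1 ∧ ∀ b ∈ B, ‖b‖ ≤ 1 → ∃ a ∈ A, ‖b - a‖ ≤ γ') :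
    A = B :=
  stmt4_general A B hA_closed hAB hnear
end

section
/- Let A and B be C*-subalgebras of a C*-algebra C with B ⊂_{1/2} A, i.e., there is γ' < 1/2 such that every element of the unit ball of B is within γ' of an element of A. If A is separable then B is separable. -/
/-!
Choose `r` with `2γ' < r < 1`. Approximating a countable dense subset of `A` to within
`r / 2 - γ'` and choosing, for each of its points, one point of the unit ball of `B` close to
it, gives a countable `r`-net `S` of the unit ball of `B`. Then every `b ∈ B` is within
`r ‖b‖` of the span of `S`; applying this to the successive errors gives approximations
within `rⁿ ‖b‖`, so `B` lies in the closure of the span of the countable set `S`.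
-/

open Set Filter Topology Metric Submodule

theorem TopologicalSpace.IsSeparable.exists_countable_net_of_near {X : Type*}
    [PseudoMetricSpace X] {s t : Set X} (ht : IsSeparable t) {δ ε : ℝ} (hδε : 2 * δ < ε)
    (hst : ∀ x ∈ s, ∃ y ∈ t, dist x y ≤ δ) :
    ∃ S ⊆ s, S.Countable ∧ ∀ x ∈ s, ∃ y ∈ S, dist x y < ε := by
  obtain ⟨D, hDc, htD⟩ := ht
  let D' : Set X := {d ∈ D | ∃ x ∈ s, dist x d < ε / 2}
  choose g hgs hgd using fun d : D' => d.2.2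
  have : Countable D' := (hDc.mono (sep_subset _ _)).to_subtype
  refine ⟨range g, range_subset_iff.2 hgs, countable_range g, fun x hx => ?_⟩
  obtain ⟨y, hy, hxy⟩ := hst x hx
  obtain ⟨d, hd, hyd⟩ := Metric.mem_closure_iff.1 (htD hy) (ε / 2 - δ) (by linarith)
  have hxd : dist x d < ε / 2 := by linarith [dist_triangle x y d]
  refine ⟨g ⟨d, hd, x, hx, hxd⟩, mem_range_self _, ?_⟩
  calc dist x (g _) ≤ dist x d + dist (g _) d := dist_triangle_right _ _ _
    _ < ε / 2 + ε / 2 := add_lt_add hxd (hgd _)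
    _ = ε := add_halves ε

theorem AddSubgroup.subset_closure_of_forall_norm_sub_le_mul {E : Type*}
    [SeminormedAddCommGroup E] {U V : AddSubgroup E} (hUV : U ≤ V) {r : ℝ} (hr0 : 0 ≤ r)
    (hr1 : r < 1) (h : ∀ v ∈ V, ∃ u ∈ U, ‖v - u‖ ≤ r * ‖v‖) :
    (V : Set E) ⊆ _root_.closure (U : Set E) := by
  intro v hv
  have hpow : ∀ n : ℕ, ∃ u ∈ U, ‖v - u‖ ≤ r ^ n * ‖v‖ := by
    intro n
    induction n with
    | zero => exact ⟨0, U.zero_mem, by simp⟩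
    | succ n ih =>
      obtain ⟨u, hu, hvu⟩ := ih
      obtain ⟨u', hu', hu'le⟩ := h (v - u) (V.sub_mem hv (hUV hu))
      refine ⟨u + u', U.add_mem hu hu', ?_⟩
      calc ‖v - (u + u')‖ = ‖v - u - u'‖ := by rw [sub_add_eq_sub_sub]
        _ ≤ r * ‖v - u‖ := hu'le
        _ ≤ r * (r ^ n * ‖v‖) := by gcongr
        _ = r ^ (n + 1) * ‖v‖ := by ring
  have hlim : Tendsto (fun n : ℕ => r ^ n * ‖v‖) atTop (𝓝 0) := by
    simpa using (tendsto_pow_atTop_nhds_zero_of_lt_one hr0 hr1).mul_const ‖v‖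
  refine Metric.mem_closure_iff.2 fun ε hε => ?_
  obtain ⟨n, hn⟩ := (hlim.eventually (gt_mem_nhds hε)).exists
  obtain ⟨u, hu, hvu⟩ := hpow n
  exact ⟨u, hu, by rw [dist_eq_norm]; linarith⟩

theorem Submodule.exists_mem_span_norm_sub_le_mul {𝕜 E : Type*} [RCLike 𝕜]
    [NormedAddCommGroup E] [NormedSpace 𝕜 E] {V : Submodule 𝕜 E} {S : Set E} {r : ℝ}
    (hS : ∀ v ∈ V, ‖v‖ ≤ 1 → ∃ s ∈ S, ‖v - s‖ ≤ r) {v : E} (hv : v ∈ V) :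
    ∃ u ∈ span 𝕜 S, ‖v - u‖ ≤ r * ‖v‖ := by
  rcases eq_or_ne v 0 with rfl | hv0
  · exact ⟨0, zero_mem _, by simp⟩
  set c : 𝕜 := (‖v‖ : 𝕜)
  have hc : ‖c‖ = ‖v‖ := by simp [c]
  have hc0 : c ≠ 0 := norm_ne_zero_iff.1 (hc.trans_ne (norm_ne_zero_iff.2 hv0))
  have hunit : ‖c⁻¹ • v‖ ≤ 1 := by
    rw [norm_smul, norm_inv, hc, inv_mul_cancel₀ (norm_ne_zero_iff.2 hv0)]
  obtain ⟨s, hs, hvs⟩ := hS (c⁻¹ • v) (V.smul_mem _ hv) hunit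
  refine ⟨c • s, smul_mem _ _ (subset_span hs), ?_⟩
  calc ‖v - c • s‖ = ‖c • (c⁻¹ • v - s)‖ := by rw [smul_sub, smul_inv_smul₀ hc0]
    _ = ‖v‖ * ‖c⁻¹ • v - s‖ := by rw [norm_smul, hc]
    _ ≤ r * ‖v‖ := by rw [mul_comm]; gcongr

theorem stmt5_general {C : Type*} [NonUnitalCStarAlgebra C]
    (A B : NonUnitalStarSubalgebra ℂ C)
    (hnear : ∃ γ' : ℝ, γ' < 1 / 2 ∧ ∀ b ∈ B, ‖b‖ ≤ 1 → ∃ a ∈ A, ‖b - a‖ ≤ γ')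
    (hsep : TopologicalSpace.IsSeparable (A : Set C)) :
    TopologicalSpace.IsSeparable (B : Set C) := by
  obtain ⟨γ', hγ', hnear⟩ := hnear
  obtain ⟨r, hγr, hr1⟩ := exists_between (max_lt (by linarith : 2 * γ' < 1) zero_lt_one)
  rw [max_lt_iff] at hγr
  let V : Submodule ℂ C := B.toNonUnitalSubalgebra.toSubmodule
  obtain ⟨S, hSball, hSc, hnet⟩ :=
    hsep.exists_countable_net_of_near (s := (B : Set C) ∩ closedBall 0 1) hγr.1
      fun b hb => by simpa [dist_eq_norm] using hnear b hb.1 (mem_closedBall_zero_iff.1 hb.2)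
  have hSV : span ℂ S ≤ V := span_le.2 fun s hs => (hSball hs).1
  have hSnet : ∀ v ∈ V, ‖v‖ ≤ 1 → ∃ s ∈ S, ‖v - s‖ ≤ r := fun v hv hv1 => by
    obtain ⟨s, hs, hvs⟩ := hnet v ⟨hv, mem_closedBall_zero_iff.2 hv1⟩
    exact ⟨s, hs, (dist_eq_norm v s ▸ hvs).le⟩
  have hBS : (V : Set C) ⊆ closure (span ℂ S) :=
    AddSubgroup.subset_closure_of_forall_norm_sub_le_mul (U := (span ℂ S).toAddSubgroup)
      (V := V.toAddSubgroup) hSV hγr.2.le hr1 fun _ hv => exists_mem_span_norm_sub_le_mul hSnet hv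
  exact hSc.isSeparable.span.closure.mono hBS

/-- Let `A`, `B` be C*-subalgebras of a C*-algebra `C` with `B ⊂_{1/2} A`:
there is `γ' < 1/2` such that every element of the unit ball of `B` is within distance `γ'`
of an element of `A`.  If `A` is norm-separable then so is `B`. -/
theorem stmt5 {C : Type*} [NonUnitalCStarAlgebra C]
    (A B : NonUnitalStarSubalgebra ℂ C)
    (hA_closed : IsClosed (A : Set C)) (hB_closed : IsClosed (B : Set C))
    (hnear : ∃ γ' : ℝ, γ' < 1 / 2 ∧ ∀ b ∈ B, ‖b‖ ≤ 1 → ∃ a ∈ A, ‖b - a‖ ≤ γ')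
    (hsep : TopologicalSpace.IsSeparable (A : Set C)) :
    TopologicalSpace.IsSeparable (B : Set C) :=
  stmt5_general A B hnear hsep
end

section
/- Let X ⊆ ℂ be a compact set, ε, M > 0, and f ∈ C(X) a continuous function. Then there exists η > 0 such that for every Hilbert space H, every normal operator s ∈ B(H) with spectrum contained in X, and every a ∈ B(H) with ‖a‖ ≤ M, the inequality ‖sa - as‖ < η implies ‖f(s)a - af(s)‖ < ε. -/
/-!
By Stone–Weierstrass, a continuous `f` on the compact set `X` is a uniform limit of polynomials
in `z` and `z̄`. The property "almost commuting with `s` forces almost commuting with `φ(s)`,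
uniformly in `H`, `s` and `a`" is stable under sums, products and uniform limits on `X`, because
`‖φ(s)‖ ≤ sup_X |φ|`; for `φ = z` it is trivial. For `φ = z̄` it is a quantitative Fuglede theorem,
proved by Rosenblum's argument: `g(μ) = exp(μ s*) a exp(-μ s*)` is entire with
`g'(0) = s* a - a s*`, and for normal `s` it is a unitary conjugate of
`exp(μ̄ s) a exp(-μ̄ s)`, which lies within `exp(2|μ|‖s‖) |μ| ‖sa - as‖` of `a`. The Cauchy
estimate on the circle `|μ| = r` then gives `‖s* a - a s*‖ ≤ ‖a‖ / r + exp(2r‖s‖) ‖sa - as‖`.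
-/

open NormedSpace Metric

section BanachAlgebra

variable {A : Type*} [NormedRing A] [NormedAlgebra ℂ A]

theorem NormedSpace.norm_exp_le_exp_norm [NormOneClass A] (x : A) :
    ‖exp x‖ ≤ Real.exp ‖x‖ := by
  rw [exp_eq_tsum ℂ, Real.exp_eq_exp_ℝ, exp_eq_tsum_div]
  refine (norm_tsum_le_tsum_norm (norm_expSeries_summable' x)).trans <|
    (norm_expSeries_summable' x).tsum_le_tsum (fun n => ?_) (Real.summable_pow_div_factorial ‖x‖)
  rw [norm_smul, norm_inv, RCLike.norm_natCast, div_eq_inv_mul]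
  gcongr
  exact norm_pow_le x n

variable [CompleteSpace A]

theorem hasDerivAt_exp_smul_mul_mul_exp_neg_smul (x a : A) (μ : ℂ) :
    HasDerivAt (fun ν : ℂ => exp (ν • x) * a * exp (-(ν • x)))
      (exp (μ • x) * (x * a - a * x) * exp (-(μ • x))) μ := by
  have h := ((hasDerivAt_exp_smul_const x μ).mul_const a).mul
    (hasDerivAt_exp_smul_const' (-x) μ)
  simp only [smul_neg] at h
  exact h.congr_deriv (by noncomm_ring)

theorem norm_exp_mul_mul_exp_neg_sub_le [NormOneClass A] (x a : A) :
    ‖exp x * a * exp (-x) - a‖ ≤ Real.exp (2 * ‖x‖) * ‖x * a - a * x‖ := by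
  have hderiv : ∀ ν ∈ closedBall (0 : ℂ) 1, ‖exp (ν • x) * (x * a - a * x) * exp (-(ν • x))‖
      ≤ Real.exp (2 * ‖x‖) * ‖x * a - a * x‖ := by
    intro ν hν
    have hexp : ∀ y : A, ‖y‖ ≤ ‖x‖ → ‖exp y‖ ≤ Real.exp ‖x‖ := fun y hy =>
      (norm_exp_le_exp_norm y).trans (Real.exp_le_exp.mpr hy)
    have hνx : ‖ν • x‖ ≤ ‖x‖ := by
      rw [norm_smul]
      exact mul_le_of_le_one_left (norm_nonneg x) (mem_closedBall_zero_iff.mp hν)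
    calc ‖exp (ν • x) * (x * a - a * x) * exp (-(ν • x))‖
        ≤ ‖exp (ν • x)‖ * ‖x * a - a * x‖ * ‖exp (-(ν • x))‖ := norm_mul₃_le
      _ ≤ Real.exp ‖x‖ * ‖x * a - a * x‖ * Real.exp ‖x‖ := by
        gcongr
        · exact hexp _ hνx
        · exact hexp _ ((norm_neg _).trans_le hνx)
      _ = Real.exp (2 * ‖x‖) * ‖x * a - a * x‖ := by rw [two_mul, Real.exp_add]; ring
  simpa using (convex_closedBall (0 : ℂ) 1).norm_image_sub_le_of_norm_hasDerivWithin_le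
    (fun ν _ => (hasDerivAt_exp_smul_mul_mul_exp_neg_smul x a ν).hasDerivWithinAt) hderiv
    (mem_closedBall_self zero_le_one) (by simp : (1 : ℂ) ∈ closedBall 0 1)

end BanachAlgebra

section CStarAlgebra

variable {A : Type*} [CStarAlgebra A]

theorem norm_exp_mul_mul_exp_neg_eq_of_commute {x y : A} (hxy : Commute x y)
    (hskew : x - y ∈ skewAdjoint A) (a : A) :
    ‖exp x * a * exp (-x)‖ = ‖exp y * a * exp (-y)‖ := by
  let _ : NormedAlgebra ℚ A := .restrictScalars ℚ ℂ A
  have hcomm : Commute (x - y) y := hxy.sub_left (Commute.refl y)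
  have hx : exp x = exp (x - y) * exp y := by
    rw [← exp_add_of_commute hcomm, sub_add_cancel]
  have hnegx : exp (-x) = exp (-y) * exp (-(x - y)) := by
    rw [← exp_add_of_commute hcomm.neg_left.neg_right.symm]
    congr 1
    abel
  rw [hx, hnegx, show exp (x - y) * exp y * a * (exp (-y) * exp (-(x - y)))
      = exp (x - y) * (exp y * a * exp (-y)) * exp (-(x - y)) by noncomm_ring,
    CStarRing.norm_mul_mem_unitary _ (exp_mem_unitary_of_mem_skewAdjoint (neg_mem hskew)),
    CStarRing.norm_mem_unitary_mul _ (exp_mem_unitary_of_mem_skewAdjoint hskew)]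

theorem norm_star_mul_sub_mul_star_le (s a : A) [IsStarNormal s] {r : ℝ} (hr : 0 < r) :
    ‖star s * a - a * star s‖ ≤ ‖a‖ / r + Real.exp (2 * r * ‖s‖) * ‖s * a - a * s‖ := by
  rcases subsingleton_or_nontrivial A with _ | _
  · rw [Subsingleton.elim (star s * a - a * star s) 0, norm_zero]
    positivity
  set g : ℂ → A := fun μ => exp (μ • star s) * a * exp (-(μ • star s))
  have hg : ∀ μ, HasDerivAt g
      (exp (μ • star s) * (star s * a - a * star s) * exp (-(μ • star s))) μ :=
    hasDerivAt_exp_smul_mul_mul_exp_neg_smul (star s) a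
  have hsphere : ∀ μ ∈ sphere (0 : ℂ) r,
      ‖g μ‖ ≤ ‖a‖ + Real.exp (2 * r * ‖s‖) * (r * ‖s * a - a * s‖) := by
    intro μ hμ
    have hμr : ‖star μ‖ = r := by rw [norm_star, ← mem_sphere_zero_iff_norm.mp hμ]
    have hskew : μ • star s - star μ • s ∈ skewAdjoint A := by
      rw [skewAdjoint.mem_iff, star_sub, star_smul, star_smul, star_star, star_star, neg_sub]
    have hcomm : Commute (μ • star s) (star μ • s) :=
      (‹IsStarNormal s›.star_comm_self.smul_left μ).smul_right (star μ)
    calc ‖g μ‖ = ‖exp (star μ • s) * a * exp (-(star μ • s))‖ :=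
          norm_exp_mul_mul_exp_neg_eq_of_commute hcomm hskew a
      _ ≤ ‖a‖ + ‖exp (star μ • s) * a * exp (-(star μ • s)) - a‖ := norm_le_norm_add_norm_sub' _ _
      _ ≤ ‖a‖ + Real.exp (2 * ‖star μ • s‖) * ‖star μ • s * a - a * star μ • s‖ := by
          gcongr
          exact norm_exp_mul_mul_exp_neg_sub_le _ _
      _ = ‖a‖ + Real.exp (2 * r * ‖s‖) * (r * ‖s * a - a * s‖) := by
          rw [smul_mul_assoc, mul_smul_comm, ← smul_sub, norm_smul, norm_smul, hμr, mul_assoc]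
  have hcauchy := Complex.norm_deriv_le_of_forall_mem_sphere_norm_le hr
    (Differentiable.diffContOnCl fun μ => (hg μ).differentiableAt) hsphere
  rw [(hg 0).deriv] at hcauchy
  simp only [zero_smul, exp_zero, neg_zero, one_mul, mul_one] at hcauchy
  calc ‖star s * a - a * star s‖ ≤ _ := hcauchy
    _ = ‖a‖ / r + Real.exp (2 * r * ‖s‖) * ‖s * a - a * s‖ := by field_simp

end CStarAlgebra

section Commutator

variable {R : Type*} [NormedRing R]

theorem norm_add_mul_sub_mul_add_le (u v a : R) :
    ‖(u + v) * a - a * (u + v)‖ ≤ ‖u * a - a * u‖ + ‖v * a - a * v‖ := by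
  rw [show (u + v) * a - a * (u + v) = (u * a - a * u) + (v * a - a * v) by noncomm_ring]
  exact norm_add_le _ _

theorem norm_mul_mul_sub_mul_mul_le (u v a : R) :
    ‖u * v * a - a * (u * v)‖ ≤ ‖u‖ * ‖v * a - a * v‖ + ‖u * a - a * u‖ * ‖v‖ := by
  rw [show u * v * a - a * (u * v) = u * (v * a - a * v) + (u * a - a * u) * v by noncomm_ring]
  exact (norm_add_le _ _).trans (add_le_add (norm_mul_le _ _) (norm_mul_le _ _))

theorem norm_mul_sub_mul_le (u a : R) : ‖u * a - a * u‖ ≤ 2 * ‖u‖ * ‖a‖ := by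
  calc ‖u * a - a * u‖ ≤ ‖u‖ * ‖a‖ + ‖a‖ * ‖u‖ :=
        (norm_sub_le _ _).trans (add_le_add (norm_mul_le _ _) (norm_mul_le _ _))
    _ = 2 * ‖u‖ * ‖a‖ := by ring

end Commutator

def PreservesAlmostCommuting (X : Set ℂ) (M : ℝ) (φ : ℂ → ℂ) : Prop :=
  ∀ ε > (0 : ℝ), ∃ η > (0 : ℝ), ∀ (H : Type) (_ : NormedAddCommGroup H)
    (_ : InnerProductSpace ℂ H) (_ : CompleteSpace H) (s a : H →L[ℂ] H),
    IsStarNormal s → spectrum ℂ s ⊆ X → ‖a‖ ≤ M →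
    ‖s * a - a * s‖ < η → ‖cfc φ s * a - a * cfc φ s‖ < ε

section PreservesAlmostCommuting

variable {X : Set ℂ} {M : ℝ} {φ ψ : ℂ → ℂ}

theorem PreservesAlmostCommuting.congr (h : PreservesAlmostCommuting X M φ)
    (hφψ : Set.EqOn φ ψ X) : PreservesAlmostCommuting X M ψ := by
  intro ε hε
  obtain ⟨η, hη, hφ⟩ := h ε hε
  refine ⟨η, hη, fun H _ _ _ s a hs hsX ha hsa => ?_⟩
  rw [← cfc_congr fun z hz => hφψ (hsX hz)]
  exact hφ H _ _ _ s a hs hsX ha hsa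

theorem preservesAlmostCommuting_const (c : ℂ) :
    PreservesAlmostCommuting X M fun _ => c := by
  refine fun ε hε => ⟨1, one_pos, fun H _ _ _ s a hs _ _ _ => ?_⟩
  rwa [cfc_const c s, Algebra.commutes, sub_self, norm_zero]

theorem preservesAlmostCommuting_id : PreservesAlmostCommuting X M fun z => z := by
  refine fun ε hε => ⟨ε, hε, fun H _ _ _ s a hs _ _ hsa => ?_⟩
  rwa [cfc_id' ℂ s]

theorem preservesAlmostCommuting_star (hX : Bornology.IsBounded X) (hM : 0 ≤ M) :
    PreservesAlmostCommuting X M star := by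
  obtain ⟨R, hR, hXR⟩ := hX.exists_pos_norm_le
  intro ε hε
  set r := 2 * (M + 1) / ε
  have hr : 0 < r := by positivity
  refine ⟨ε / 2 * Real.exp (-(2 * r * R)), by positivity, fun H _ _ _ s a hs hsX ha hsa => ?_⟩
  have hsR : ‖s‖ ≤ R := by
    simpa [cfc_id' ℂ s] using
      norm_cfc_le (a := s) (f := fun z : ℂ => z) hR.le fun z hz => hXR z (hsX hz)
  have hMr : M / r < ε / 2 := by
    rw [div_lt_iff₀ hr, show ε / 2 * r = M + 1 by simp only [r]; field_simp]
    linarith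
  rw [cfc_star_id (a := s)]
  calc ‖star s * a - a * star s‖
      ≤ ‖a‖ / r + Real.exp (2 * r * ‖s‖) * ‖s * a - a * s‖ :=
        norm_star_mul_sub_mul_star_le s a hr
    _ ≤ M / r + Real.exp (2 * r * R) * ‖s * a - a * s‖ := by gcongr
    _ < ε / 2 + Real.exp (2 * r * R) * (ε / 2 * Real.exp (-(2 * r * R))) := by gcongr
    _ = ε := by rw [Real.exp_neg]; field_simp; ring

theorem PreservesAlmostCommuting.add (hφ : ContinuousOn φ X) (hψ : ContinuousOn ψ X)
    (h₁ : PreservesAlmostCommuting X M φ) (h₂ : PreservesAlmostCommuting X M ψ) :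
    PreservesAlmostCommuting X M fun z => φ z + ψ z := by
  intro ε hε
  obtain ⟨η₁, hη₁, hφ'⟩ := h₁ (ε / 2) (by positivity)
  obtain ⟨η₂, hη₂, hψ'⟩ := h₂ (ε / 2) (by positivity)
  refine ⟨min η₁ η₂, lt_min hη₁ hη₂, fun H _ _ _ s a hs hsX ha hsa => ?_⟩
  rw [cfc_add (a := s) φ ψ (hφ.mono hsX) (hψ.mono hsX)]
  calc _ ≤ _ := norm_add_mul_sub_mul_add_le _ _ a
    _ < ε / 2 + ε / 2 := add_lt_add
        (hφ' H _ _ _ s a hs hsX ha (hsa.trans_le (min_le_left _ _)))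
        (hψ' H _ _ _ s a hs hsX ha (hsa.trans_le (min_le_right _ _)))
    _ = ε := add_halves ε

theorem PreservesAlmostCommuting.mul (hX : IsCompact X) (hφ : ContinuousOn φ X)
    (hψ : ContinuousOn ψ X) (h₁ : PreservesAlmostCommuting X M φ)
    (h₂ : PreservesAlmostCommuting X M ψ) :
    PreservesAlmostCommuting X M fun z => φ z * ψ z := by
  obtain ⟨C₁, hC₁⟩ := hX.exists_bound_of_continuousOn hφ
  obtain ⟨C₂, hC₂⟩ := hX.exists_bound_of_continuousOn hψ
  set K := max (max C₁ C₂) 1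
  have hK : 0 < K := lt_max_of_lt_right one_pos
  intro ε hε
  obtain ⟨η₁, hη₁, hφ'⟩ := h₁ (ε / (2 * K)) (by positivity)
  obtain ⟨η₂, hη₂, hψ'⟩ := h₂ (ε / (2 * K)) (by positivity)
  refine ⟨min η₁ η₂, lt_min hη₁ hη₂, fun H _ _ _ s a hs hsX ha hsa => ?_⟩
  have hu : ‖cfc φ s‖ ≤ K := norm_cfc_le hK.le fun z hz =>
    (hC₁ z (hsX hz)).trans ((le_max_left _ _).trans (le_max_left _ _))
  have hv : ‖cfc ψ s‖ ≤ K := norm_cfc_le hK.le fun z hz =>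
    (hC₂ z (hsX hz)).trans ((le_max_right _ _).trans (le_max_left _ _))
  rw [cfc_mul φ ψ s (hφ.mono hsX) (hψ.mono hsX)]
  calc _ ≤ _ := norm_mul_mul_sub_mul_mul_le _ _ a
    _ ≤ K * ‖cfc ψ s * a - a * cfc ψ s‖ + ‖cfc φ s * a - a * cfc φ s‖ * K := by gcongr
    _ < K * (ε / (2 * K)) + ε / (2 * K) * K := add_lt_add
        (mul_lt_mul_of_pos_left (hψ' H _ _ _ s a hs hsX ha (hsa.trans_le (min_le_right _ _))) hK)
        (mul_lt_mul_of_pos_right (hφ' H _ _ _ s a hs hsX ha (hsa.trans_le (min_le_left _ _))) hK)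
    _ = ε := by field_simp; ring

theorem PreservesAlmostCommuting.of_uniform_approx (hM : 0 ≤ M) (hφ : ContinuousOn φ X)
    (happrox : ∀ δ > (0 : ℝ), ∃ ψ : ℂ → ℂ, ContinuousOn ψ X ∧ (∀ z ∈ X, ‖φ z - ψ z‖ ≤ δ) ∧
      PreservesAlmostCommuting X M ψ) :
    PreservesAlmostCommuting X M φ := by
  intro ε hε
  set δ := ε / (4 * (M + 1))
  obtain ⟨ψ, hψ, hφψ, h⟩ := happrox δ (by positivity)
  obtain ⟨η, hη, hψ'⟩ := h (ε / 2) (by positivity)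
  refine ⟨η, hη, fun H _ _ _ s a hs hsX ha hsa => ?_⟩
  have hdiff : ‖cfc φ s - cfc ψ s‖ ≤ δ := by
    rw [← cfc_sub φ ψ s (hφ.mono hsX) (hψ.mono hsX)]
    exact norm_cfc_le (by positivity) fun z hz => hφψ z (hsX hz)
  have hδM : 2 * δ * M < ε / 2 := by
    rw [show 2 * δ * M = ε / 2 * (M / (M + 1)) by simp only [δ]; field_simp; ring]
    exact mul_lt_of_lt_one_right (by positivity) ((div_lt_one (by positivity)).mpr (by linarith))
  calc ‖cfc φ s * a - a * cfc φ s‖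
      ≤ ‖cfc ψ s * a - a * cfc ψ s‖ + ‖(cfc φ s - cfc ψ s) * a - a * (cfc φ s - cfc ψ s)‖ := by
        simpa using norm_add_mul_sub_mul_add_le (cfc ψ s) (cfc φ s - cfc ψ s) a
    _ ≤ ‖cfc ψ s * a - a * cfc ψ s‖ + 2 * δ * M := by
        gcongr
        exact (norm_mul_sub_mul_le _ a).trans (by gcongr)
    _ < ε / 2 + ε / 2 := add_lt_add (hψ' H _ _ _ s a hs hsX ha hsa) hδM
    _ = ε := add_halves ε

end PreservesAlmostCommuting

namespace ContinuousMap

variable {X : Set ℂ}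

open scoped Classical in
noncomputable def extendByZero (g : C(X, ℂ)) : ℂ → ℂ :=
  fun z => if hz : z ∈ X then g ⟨z, hz⟩ else 0

theorem extendByZero_of_mem (g : C(X, ℂ)) {z : ℂ} (hz : z ∈ X) :
    g.extendByZero z = g ⟨z, hz⟩ :=
  dif_pos hz

theorem continuousOn_extendByZero (g : C(X, ℂ)) : ContinuousOn g.extendByZero X := by
  rw [continuousOn_iff_continuous_domRestrict]
  convert g.continuous
  ext z
  exact g.extendByZero_of_mem z.2

end ContinuousMap

open ContinuousMap in
theorem preservesAlmostCommuting_of_continuousOn {X : Set ℂ} {M : ℝ} {φ : ℂ → ℂ}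
    (hX : IsCompact X) (hM : 0 ≤ M) (hφ : ContinuousOn φ X) :
    PreservesAlmostCommuting X M φ := by
  have : CompactSpace X := isCompact_iff_compactSpace.mp hX
  suffices h : ∀ g : C(X, ℂ), PreservesAlmostCommuting X M g.extendByZero from
    (h ⟨X.domRestrict φ, hφ.domRestrict⟩).congr fun z hz => extendByZero_of_mem _ hz
  intro g
  induction g using ContinuousMap.induction_on_of_compact with
  | const c =>
    exact (preservesAlmostCommuting_const c).congr fun z hz => by simp [extendByZero_of_mem _ hz]
  | id =>
    exact preservesAlmostCommuting_id.congr fun z hz => by simp [extendByZero_of_mem _ hz]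
  | star_id =>
    exact (preservesAlmostCommuting_star hX.isBounded hM).congr fun z hz => by
      simp [extendByZero_of_mem _ hz]
  | add g h hg hh =>
    exact (hg.add (continuousOn_extendByZero g) (continuousOn_extendByZero h) hh).congr
      fun z hz => by simp [extendByZero_of_mem _ hz]
  | mul g h hg hh =>
    exact (hg.mul hX (continuousOn_extendByZero g) (continuousOn_extendByZero h) hh).congr
      fun z hz => by simp [extendByZero_of_mem _ hz]
  | frequently g hg =>
    refine .of_uniform_approx hM (continuousOn_extendByZero g) fun δ hδ => ?_
    obtain ⟨h, hPh, hgh⟩ := (hg.and_eventually (ball_mem_nhds g hδ)).exists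
    refine ⟨h.extendByZero, continuousOn_extendByZero h, fun z hz => ?_, hPh⟩
    rw [extendByZero_of_mem _ hz, extendByZero_of_mem _ hz, ← dist_eq_norm]
    exact (dist_apply_le_dist _).trans (dist_comm g h ▸ hgh.le)

/-- Let `X ⊆ ℂ` be compact, `ε, M > 0`, and `f` a continuous function on `X`.
Then there exists `η > 0` such that for every Hilbert space `H`, every normal operator
`s ∈ B(H)` with spectrum contained in `X`, and every `a ∈ B(H)` with `‖a‖ ≤ M`,
`‖sa - as‖ < η` implies `‖f(s)a - af(s)‖ < ε`, where `f(s)` is given by the continuous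
functional calculus. -/
theorem stmt8 (X : Set ℂ) (hX : IsCompact X) (ε M : ℝ) (hε : 0 < ε) (hM : 0 < M)
    (f : ℂ → ℂ) (hf : ContinuousOn f X) :
    ∃ η > (0 : ℝ), ∀ (H : Type) (_ : NormedAddCommGroup H) (_ : InnerProductSpace ℂ H)
      (_ : CompleteSpace H) (s a : H →L[ℂ] H), IsStarNormal s → spectrum ℂ s ⊆ X →
      ‖a‖ ≤ M → ‖s * a - a * s‖ < η → ‖cfc f s * a - a * cfc f s‖ < ε :=
  preservesAlmostCommuting_of_continuousOn hX hM.le hf ε hε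
end
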